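/- Let 0 < p < ∞, let ω be a radial weight with ω ∈ D and let μ be a radial weight with μ ∈ D̂. Let k ∈ ℕ, k > 1, be such that there is a constant c > 0 with ∫_r^{1−(1−r)/k} ω(s) ds ≥ c ω̂(r) for all 0 ≤ r < 1. Then there exists a constant C = C(ω, μ, p) > 0 such that ω_{k^n} μ_{k^{n−1}}^p ≤ C (ω μ̂^p)_{k^n} for all n ∈ ℕ, where (ω μ̂^p)_x := ∫_0^1 s^x ω(s) μ̂(s)^p ds. -/

import Mathlib

/-!
For `q > 1` put `r_j = 1 - q^{-j}`. Iterating the `D̂` condition gives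
`ω̂(r_j) ≤ A^{m-j} ω̂(r_m)`, and `s^{q^m} ≤ exp(-q^{m-j-1})` on `[r_j, r_{j+1}]`; summing over these
intervals, the super-exponential decay beats the geometric growth and `ω_{q^m} ≲ ω̂(r_m)`.
Likewise `μ_{k^{n-1}} ≲ μ̂(r_{n-1}) ≲ μ̂(r_{n+1})`. Conversely, on `[r_n, r_{n+1}]` we have
`s^{k^n} ≥ e^{-2}` and `μ̂(s) ≥ μ̂(r_{n+1})`, while the hypothesis on `k` says exactly that `ω` has
mass `≥ c ω̂(r_n)` there. Hence `(ω μ̂^p)_{k^n} ≳ ω̂(r_n) μ̂(r_{n+1})^p ≳ ω_{k^n} μ_{k^{n-1}}^p`.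
-/

open MeasureTheory Set Filter
open scoped ENNReal

/-- The tail integral `ω̂(r) = ∫_r^1 ω(s) ds` of a radial weight. -/
noncomputable def wHat (ω : ℝ → ℝ) (r : ℝ) : ℝ := ∫ s in r..1, ω s

/-- The moment `ω_x = ∫_0^1 s^x ω(s) ds` of a radial weight. -/
noncomputable def wMom (ω : ℝ → ℝ) (x : ℝ) : ℝ := ∫ s in (0:ℝ)..1, s ^ x * ω s

/-- A radial weight: nonnegative, integrable on `[0,1)`, with positive tail integrals. -/
def IsRadialWeight (ω : ℝ → ℝ) : Prop :=
  (∀ s ∈ Set.Ico (0:ℝ) 1, 0 ≤ ω s) ∧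
    MeasureTheory.IntegrableOn ω (Set.Ico (0:ℝ) 1) ∧
    ∀ r ∈ Set.Ico (0:ℝ) 1, 0 < wHat ω r

/-- The class `D̂` of radial weights. -/
def Dhat (ω : ℝ → ℝ) : Prop :=
  ∃ C > (1:ℝ), ∀ r ∈ Set.Ico (0:ℝ) 1, wHat ω r ≤ C * wHat ω ((1 + r) / 2)

/-- The class `Ď` of radial weights. -/
def Dcheck (ω : ℝ → ℝ) : Prop :=
  ∃ k > (1:ℝ), ∃ C > (1:ℝ), ∀ r ∈ Set.Ico (0:ℝ) 1,
    wHat ω r ≥ C * wHat ω (1 - (1 - r) / k)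

/-- The class `D = D̂ ∩ Ď`. -/
def Dclass (ω : ℝ → ℝ) : Prop := Dhat ω ∧ Dcheck ω

/-- The class `M`: `ω_x ≥ C ω_{kx}` for all `x ≥ 1`. -/
def Mclass (ω : ℝ → ℝ) : Prop :=
  ∃ C > (1:ℝ), ∃ k > (1:ℝ), ∀ x : ℝ, 1 ≤ x → wMom ω x ≥ C * wMom ω (k * x)

/-- The fractional derivative `D^μ f(z) = Σ (f̂(n)/μ_{2n+1}) zⁿ` induced by a radial
weight `μ`, acting on the Taylor coefficients `a` of `f`. -/
noncomputable def Dfrac (μ : ℝ → ℝ) (a : ℕ → ℂ) (z : ℂ) : ℂ :=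
  ∑' n : ℕ, (a n / ((wMom μ (2 * (n : ℝ) + 1) : ℝ) : ℂ)) * z ^ n

/-- `∫_𝔻 |f(z)|^p w(|z|) dA(z)` as a Lebesgue integral (up to the normalization `1/π`). -/
noncomputable def discLInt (p : ℝ) (w : ℝ → ℝ) (f : ℂ → ℂ) : ℝ≥0∞ :=
  ∫⁻ z in Metric.ball (0:ℂ) 1, ENNReal.ofReal (‖f z‖ ^ p * w ‖z‖)

open Real

namespace IsRadialWeight

variable {ω : ℝ → ℝ} {a b : ℝ} (hω : IsRadialWeight ω)
include hω

lemma ae_nonneg : ∀ᵐ s ∂volume.restrict (Icc (0:ℝ) 1), 0 ≤ ω s :=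
  (ae_restrict_congr_set Ico_ae_eq_Icc).mp (ae_restrict_of_forall_mem measurableSet_Ico hω.1)

lemma integrableOn_Icc : IntegrableOn ω (Icc 0 1) :=
  (integrableOn_Icc_iff_integrableOn_Ico).mpr hω.2.1

lemma intervalIntegrable (ha : 0 ≤ a) (hab : a ≤ b) (hb : b ≤ 1) :
    IntervalIntegrable ω volume a b :=
  (hω.integrableOn_Icc.mono_set
    (uIcc_subset_Icc ⟨ha, hab.trans hb⟩ ⟨ha.trans hab, hb⟩)).intervalIntegrable

lemma intervalIntegrable_mul {g : ℝ → ℝ} (hg : ContinuousOn g (Icc 0 1))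
    (ha : 0 ≤ a) (hab : a ≤ b) (hb : b ≤ 1) :
    IntervalIntegrable (fun s => g s * ω s) volume a b :=
  (hω.intervalIntegrable ha hab hb).continuousOn_mul
    (hg.mono (uIcc_subset_Icc ⟨ha, hab.trans hb⟩ ⟨ha.trans hab, hb⟩))

lemma integral_mul_nonneg {g : ℝ → ℝ} (ha : 0 ≤ a) (hab : a ≤ b) (hb : b ≤ 1)
    (hg : ∀ s ∈ Icc a b, 0 ≤ g s) : 0 ≤ ∫ s in a..b, g s * ω s := by
  refine intervalIntegral.integral_nonneg_of_ae_restrict hab ?_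
  filter_upwards [ae_restrict_of_ae_restrict_of_subset (Icc_subset_Icc ha hb) hω.ae_nonneg,
    ae_restrict_mem measurableSet_Icc] with s hωs hs
  exact mul_nonneg (hg s hs) hωs

lemma integral_mul_mono {g h : ℝ → ℝ} (hg : ContinuousOn g (Icc 0 1))
    (hh : ContinuousOn h (Icc 0 1)) (ha : 0 ≤ a) (hab : a ≤ b) (hb : b ≤ 1)
    (hgh : ∀ s ∈ Icc a b, g s ≤ h s) :
    ∫ s in a..b, g s * ω s ≤ ∫ s in a..b, h s * ω s := by
  refine intervalIntegral.integral_mono_ae_restrict hab (hω.intervalIntegrable_mul hg ha hab hb)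
    (hω.intervalIntegrable_mul hh ha hab hb) ?_
  filter_upwards [ae_restrict_of_ae_restrict_of_subset (Icc_subset_Icc ha hb) hω.ae_nonneg,
    ae_restrict_mem measurableSet_Icc] with s hωs hs
  exact mul_le_mul_of_nonneg_right (hgh s hs) hωs

lemma integral_nonneg (ha : 0 ≤ a) (hab : a ≤ b) (hb : b ≤ 1) : 0 ≤ ∫ s in a..b, ω s := by
  simpa using hω.integral_mul_nonneg (g := 1) ha hab hb fun _ _ => zero_le_one

lemma wHat_nonneg (ha : 0 ≤ a) (ha' : a ≤ 1) : 0 ≤ wHat ω a :=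
  hω.integral_nonneg ha ha' le_rfl

lemma wHat_eq_integral_add (ha : 0 ≤ a) (hab : a ≤ b) (hb : b ≤ 1) :
    wHat ω a = (∫ s in a..b, ω s) + wHat ω b :=
  (intervalIntegral.integral_add_adjacent_intervals (hω.intervalIntegrable ha hab hb)
    (hω.intervalIntegrable (ha.trans hab) hb le_rfl)).symm

lemma integral_le_wHat (ha : 0 ≤ a) (hab : a ≤ b) (hb : b ≤ 1) :
    ∫ s in a..b, ω s ≤ wHat ω a := by
  rw [hω.wHat_eq_integral_add ha hab hb]
  linarith [hω.wHat_nonneg (ha.trans hab) hb]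

lemma wHat_antitoneOn : AntitoneOn (wHat ω) (Icc 0 1) := fun a ha b hb hab => by
  rw [hω.wHat_eq_integral_add ha.1 hab hb.2]
  linarith [hω.integral_nonneg ha.1 hab hb.2]

lemma continuousOn_wHat : ContinuousOn (wHat ω) (Icc 0 1) := by
  unfold wHat
  simpa [uIcc_of_le zero_le_one] using
    intervalIntegral.continuousOn_primitive_interval_left (a := 0) (b := 1) (μ := volume)
      (by simpa [uIcc_of_le zero_le_one] using hω.integrableOn_Icc)

lemma wMom_nonneg (x : ℝ) : 0 ≤ wMom ω x :=
  hω.integral_mul_nonneg le_rfl zero_le_one le_rfl fun _ hs => rpow_nonneg hs.1 x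

lemma integral_rpow_mul_le {x : ℝ} (hx : 0 ≤ x) (ha : 0 ≤ a) (hab : a ≤ b) (hb : b ≤ 1) :
    ∫ s in a..b, s ^ x * ω s ≤ b ^ x * wHat ω a :=
  calc ∫ s in a..b, s ^ x * ω s ≤ ∫ s in a..b, b ^ x * ω s :=
        hω.integral_mul_mono (continuousOn_id.rpow_const fun _ _ => Or.inr hx)
          continuousOn_const ha hab hb fun _ hs => rpow_le_rpow (ha.trans hs.1) hs.2 hx
    _ = b ^ x * ∫ s in a..b, ω s := intervalIntegral.integral_const_mul _ _
    _ ≤ b ^ x * wHat ω a :=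
        mul_le_mul_of_nonneg_left (hω.integral_le_wHat ha hab hb) (rpow_nonneg (ha.trans hab) x)

end IsRadialWeight

def IsTailDoubling (ω : ℝ → ℝ) (q A : ℝ) : Prop :=
  ∀ r ∈ Ico (0:ℝ) 1, wHat ω r ≤ A * wHat ω (1 - (1 - r) / q)

lemma one_sub_div_mem_Ico {q r : ℝ} (hq : 1 ≤ q) (hr : r ∈ Ico (0:ℝ) 1) :
    1 - (1 - r) / q ∈ Ico (0:ℝ) 1 := by
  have h0 : 0 < (1 - r) / q := div_pos (by linarith [hr.2]) (by linarith)
  have h1 : (1 - r) / q ≤ 1 - r := div_le_self (by linarith [hr.2]) hq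
  constructor <;> linarith [hr.1]

namespace IsTailDoubling

variable {ω : ℝ → ℝ} {q A : ℝ}

lemma pow (h : IsTailDoubling ω q A) (hq : 1 ≤ q) (hA : 0 ≤ A) (m : ℕ) :
    IsTailDoubling ω (q ^ m) (A ^ m) := by
  induction m with
  | zero => intro r _; simp
  | succ m ih =>
    intro r hr
    have hr' := one_sub_div_mem_Ico (one_le_pow₀ (n := m) hq) hr
    have hstep : 1 - (1 - (1 - (1 - r) / q ^ m)) / q = 1 - (1 - r) / q ^ (m + 1) := by
      rw [pow_succ, ← div_div]; ring
    calc wHat ω r ≤ A ^ m * wHat ω (1 - (1 - r) / q ^ m) := ih r hr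
      _ ≤ A ^ m * (A * wHat ω (1 - (1 - (1 - (1 - r) / q ^ m)) / q)) :=
          mul_le_mul_of_nonneg_left (h _ hr') (pow_nonneg hA m)
      _ = A ^ (m + 1) * wHat ω (1 - (1 - r) / q ^ (m + 1)) := by rw [hstep]; ring

lemma mono (hω : IsRadialWeight ω) (h : IsTailDoubling ω q A) (hA : 0 ≤ A) {q' : ℝ}
    (hq' : 1 ≤ q') (hq'q : q' ≤ q) : IsTailDoubling ω q' A := by
  intro r hr
  have hle : 1 - (1 - r) / q' ≤ 1 - (1 - r) / q := by
    have := div_le_div_of_nonneg_left (a := 1 - r) (by linarith [hr.2]) (by linarith) hq'q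
    linarith
  have hmem := one_sub_div_mem_Ico hq' hr
  have hmem' := one_sub_div_mem_Ico (hq'.trans hq'q) hr
  exact (h r hr).trans (mul_le_mul_of_nonneg_left
    (hω.wHat_antitoneOn (Ico_subset_Icc_self hmem) (Ico_subset_Icc_self hmem') hle) hA)

end IsTailDoubling

lemma Dhat.exists_isTailDoubling {ω : ℝ → ℝ} (hω : IsRadialWeight ω) (hD : Dhat ω) {q : ℝ}
    (hq : 1 ≤ q) : ∃ A > 0, IsTailDoubling ω q A := by
  obtain ⟨C, hC, hCω⟩ := hD
  have h2 : IsTailDoubling ω 2 C := fun r hr => by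
    simpa only [show (1 + r) / 2 = 1 - (1 - r) / 2 by ring] using hCω r hr
  obtain ⟨m, hm⟩ := pow_unbounded_of_one_lt q one_lt_two
  exact ⟨C ^ m, by positivity,
    (h2.pow one_le_two (by linarith) m).mono hω (by positivity) hq hm.le⟩

noncomputable def geomRadius (q : ℝ) (j : ℕ) : ℝ := 1 - (q ^ j)⁻¹

section geomRadius

variable {q : ℝ}

@[simp] lemma geomRadius_zero : geomRadius q 0 = 0 := by simp [geomRadius]

lemma one_sub_geomRadius_div_pow (i m : ℕ) :
    1 - (1 - geomRadius q i) / q ^ m = geomRadius q (i + m) := by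
  simp only [geomRadius, pow_add, mul_inv, sub_sub_cancel, div_eq_mul_inv]

lemma one_sub_geomRadius_div (i : ℕ) : 1 - (1 - geomRadius q i) / q = geomRadius q (i + 1) := by
  simpa using one_sub_geomRadius_div_pow (q := q) i 1

lemma geomRadius_mem_Ico (hq : 1 ≤ q) (j : ℕ) : geomRadius q j ∈ Ico (0:ℝ) 1 := by
  have h0 : 0 < (q ^ j)⁻¹ := inv_pos.mpr (by positivity)
  have h1 : (q ^ j)⁻¹ ≤ 1 := inv_le_one_of_one_le₀ (one_le_pow₀ hq)
  constructor <;> simp only [geomRadius] <;> linarith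

lemma geomRadius_monotone (hq : 1 ≤ q) : Monotone (geomRadius q) := fun i j hij => by
  have := inv_anti₀ (by positivity) (pow_le_pow_right₀ hq hij)
  simp only [geomRadius]; linarith

end geomRadius

lemma IsTailDoubling.wHat_geomRadius_le {ω : ℝ → ℝ} {q A : ℝ} (h : IsTailDoubling ω q A)
    (hq : 1 ≤ q) (hA : 0 ≤ A) (i m : ℕ) :
    wHat ω (geomRadius q i) ≤ A ^ m * wHat ω (geomRadius q (i + m)) := by
  simpa only [one_sub_geomRadius_div_pow] using h.pow hq hA m _ (geomRadius_mem_Ico hq i)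

lemma rpow_le_exp_neg_mul {s t x : ℝ} (hs : 0 ≤ s) (hst : s ≤ 1 - t) (hx : 0 ≤ x) :
    s ^ x ≤ exp (-(t * x)) := by
  rw [← neg_mul, exp_mul]
  exact rpow_le_rpow hs (hst.trans (one_sub_le_exp_neg t)) hx

lemma exp_neg_two_mul_le_one_sub {t : ℝ} (ht0 : 0 ≤ t) (ht : t ≤ 1 / 2) :
    exp (-(2 * t)) ≤ 1 - t := by
  have hE : 1 + 2 * t ≤ exp (2 * t) := by linarith [add_one_le_exp (2 * t)]
  rw [exp_neg, inv_le_iff_one_le_mul₀' (exp_pos _)]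
  nlinarith

lemma exp_neg_two_le_rpow {s y : ℝ} (hy : 2 ≤ y) (hs : 1 - y⁻¹ ≤ s) : exp (-2) ≤ s ^ y := by
  have hy0 : 0 < y := by linarith
  have ht : y⁻¹ ≤ 1 / 2 := by rw [one_div]; exact inv_anti₀ two_pos hy
  calc exp (-2) = exp (-(2 * y⁻¹)) ^ y := by rw [← exp_mul]; field_simp
    _ ≤ (1 - y⁻¹) ^ y :=
        rpow_le_rpow (exp_pos _).le (exp_neg_two_mul_le_one_sub (inv_nonneg.mpr hy0.le) ht) hy0.le
    _ ≤ s ^ y := rpow_le_rpow (by linarith) hs hy0.le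

lemma summable_pow_succ_mul_exp_neg_pow {A q : ℝ} (hA : 0 ≤ A) (hq : 1 < q) :
    Summable fun i : ℕ => A ^ (i + 1) * exp (-(q ^ i)) := by
  refine summable_of_ratio_norm_eventually_le (r := 1 / 2) (by norm_num) ?_
  have hlim : Tendsto (fun i : ℕ => A * exp (-(q ^ i * (q - 1)))) atTop (nhds 0) := by
    have h0 : Tendsto (fun i : ℕ => q ^ i * (q - 1)) atTop atTop :=
      (tendsto_pow_atTop_atTop_of_one_lt hq).atTop_mul_const (by linarith)
    simpa using (tendsto_exp_atBot.comp (tendsto_neg_atTop_atBot.comp h0)).const_mul A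
  filter_upwards [hlim.eventually (eventually_le_nhds (by norm_num : (0:ℝ) < 1 / 2))] with i hi
  have hsucc : A ^ (i + 1 + 1) * exp (-(q ^ (i + 1))) =
      A * exp (-(q ^ i * (q - 1))) * (A ^ (i + 1) * exp (-(q ^ i))) := by
    rw [show -(q ^ (i + 1)) = -(q ^ i * (q - 1)) + -(q ^ i) by ring, exp_add]; ring
  rw [norm_of_nonneg (by positivity), norm_of_nonneg (by positivity), hsucc]
  exact mul_le_mul_of_nonneg_right hi (by positivity)

namespace IsTailDoubling

variable {ω : ℝ → ℝ} {q A : ℝ}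

lemma integral_geomRadius_le (hω : IsRadialWeight ω) (h : IsTailDoubling ω q A) (hq : 1 ≤ q)
    (hA : 0 ≤ A) (i j : ℕ) :
    ∫ s in geomRadius q j..geomRadius q (j + 1), s ^ (q ^ (j + i + 1)) * ω s ≤
      A ^ (i + 1) * exp (-(q ^ i)) * wHat ω (geomRadius q (j + i + 1)) := by
  have hr := geomRadius_mem_Ico hq j
  have hr' := geomRadius_mem_Ico hq (j + 1)
  have hexp : geomRadius q (j + 1) ^ (q ^ (j + i + 1)) ≤ exp (-(q ^ i)) := by
    have hq_pow : (q ^ (j + 1))⁻¹ * q ^ (j + i + 1) = q ^ i := by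
      rw [show j + i + 1 = j + 1 + i by ring, pow_add q (j + 1) i,
        inv_mul_cancel_left₀ (by positivity)]
    rw [← hq_pow]
    exact rpow_le_exp_neg_mul hr'.1 le_rfl (by positivity)
  calc _ ≤ geomRadius q (j + 1) ^ (q ^ (j + i + 1)) * wHat ω (geomRadius q j) :=
        hω.integral_rpow_mul_le (by positivity) hr.1 (geomRadius_monotone hq j.le_succ) hr'.2.le
    _ ≤ exp (-(q ^ i)) * (A ^ (i + 1) * wHat ω (geomRadius q (j + i + 1))) :=
        mul_le_mul hexp (h.wHat_geomRadius_le hq hA j (i + 1)) (hω.wHat_nonneg hr.1 hr.2.le)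
          (exp_pos _).le
    _ = _ := by ring

lemma wMom_pow_le (hω : IsRadialWeight ω) (h : IsTailDoubling ω q A) (hq : 1 < q) (hA : 0 ≤ A) :
    ∃ B > 0, ∀ m : ℕ, wMom ω (q ^ m) ≤ B * wHat ω (geomRadius q m) := by
  set g : ℕ → ℝ := fun i => A ^ (i + 1) * exp (-(q ^ i))
  have hg : Summable g := summable_pow_succ_mul_exp_neg_pow hA hq
  refine ⟨∑' i, g i + 1, by
    linarith [(tsum_nonneg fun i => by positivity : 0 ≤ ∑' i, g i)], fun m => ?_⟩
  set r := geomRadius q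
  have hr := geomRadius_mem_Ico hq.le
  have hx : 0 ≤ q ^ m := by positivity
  have hint : ∀ a b, 0 ≤ a → a ≤ b → b ≤ 1 →
      IntervalIntegrable (fun s => s ^ q ^ m * ω s) volume a b :=
    fun a b => hω.intervalIntegrable_mul (continuousOn_id.rpow_const fun _ _ => Or.inr hx)
  have hsplit : wMom ω (q ^ m) = ∑ j ∈ Finset.range m, (∫ s in r j..r (j + 1), s ^ q ^ m * ω s)
      + ∫ s in r m..1, s ^ q ^ m * ω s := by
    rw [intervalIntegral.sum_integral_adjacent_intervals fun j _ =>
      hint _ _ (hr j).1 (geomRadius_monotone hq.le j.le_succ) (hr (j + 1)).2.le,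
      geomRadius_zero, intervalIntegral.integral_add_adjacent_intervals
        (hint _ _ le_rfl (hr m).1 (hr m).2.le) (hint _ _ (hr m).1 (hr m).2.le le_rfl)]
    rfl
  have hpiece : ∀ j ∈ Finset.range m,
      ∫ s in r j..r (j + 1), s ^ q ^ m * ω s ≤ g (m - 1 - j) * wHat ω (r m) := by
    intro j hj
    obtain ⟨i, rfl⟩ := Nat.exists_eq_add_of_lt (Finset.mem_range.mp hj)
    rw [show j + i + 1 - 1 - j = i by omega]
    exact h.integral_geomRadius_le hω hq.le hA i j
  have htail : ∫ s in r m..1, s ^ q ^ m * ω s ≤ wHat ω (r m) := by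
    simpa using hω.integral_rpow_mul_le hx (hr m).1 (hr m).2.le le_rfl
  have hsum : ∑ j ∈ Finset.range m, g (m - 1 - j) ≤ ∑' i, g i := by
    rw [Finset.sum_range_reflect g m]
    exact hg.sum_le_tsum _ fun i _ => by positivity
  calc wMom ω (q ^ m)
      ≤ ∑ j ∈ Finset.range m, g (m - 1 - j) * wHat ω (r m) + wHat ω (r m) := by
        rw [hsplit]; gcongr with j hj; exact hpiece j hj
    _ = (∑ j ∈ Finset.range m, g (m - 1 - j) + 1) * wHat ω (r m) := by
        rw [add_mul, Finset.sum_mul, one_mul]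
    _ ≤ (∑' i, g i + 1) * wHat ω (r m) := by
        gcongr
        exact hω.wHat_nonneg (hr m).1 (hr m).2.le

end IsTailDoubling

lemma IsRadialWeight.rpow_mul_wHat_rpow_mul_integral_le_wMom {ω μ : ℝ → ℝ}
    (hω : IsRadialWeight ω) (hμ : IsRadialWeight μ) {p x r r' : ℝ} (hp : 0 ≤ p) (hx : 0 ≤ x)
    (hr : 0 ≤ r) (hrr' : r ≤ r') (hr' : r' ≤ 1) :
    r ^ x * wHat μ r' ^ p * ∫ s in r..r', ω s ≤ wMom (fun s => ω s * wHat μ s ^ p) x := by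
  set G : ℝ → ℝ := fun s => s ^ x * wHat μ s ^ p
  have hG : ContinuousOn G (Icc 0 1) :=
    (continuousOn_id.rpow_const fun _ _ => Or.inr hx).mul
      (hμ.continuousOn_wHat.rpow_const fun _ _ => Or.inr hp)
  have hμr' : 0 ≤ wHat μ r' := hμ.wHat_nonneg (hr.trans hrr') hr'
  calc r ^ x * wHat μ r' ^ p * ∫ s in r..r', ω s
      = ∫ s in r..r', r ^ x * wHat μ r' ^ p * ω s := (intervalIntegral.integral_const_mul _ _).symm
    _ ≤ ∫ s in r..r', G s * ω s :=
        hω.integral_mul_mono continuousOn_const hG hr hrr' hr' fun s hs =>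
          mul_le_mul (rpow_le_rpow hr hs.1 hx)
            (rpow_le_rpow hμr' (hμ.wHat_antitoneOn ⟨hr.trans hs.1, hs.2.trans hr'⟩
              ⟨hr.trans hrr', hr'⟩ hs.2) hp) (rpow_nonneg hμr' p) (rpow_nonneg (hr.trans hs.1) x)
    _ ≤ ∫ s in (0:ℝ)..1, G s * ω s := by
        refine intervalIntegral.integral_mono_interval hr hrr' hr' ?_
          (hω.intervalIntegrable_mul hG le_rfl zero_le_one le_rfl)
        filter_upwards [ae_restrict_of_ae_restrict_of_subset Ioc_subset_Icc_self hω.ae_nonneg,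
          ae_restrict_mem measurableSet_Ioc] with s hωs hs
        exact mul_nonneg (mul_nonneg (rpow_nonneg hs.1.le x)
          (rpow_nonneg (hμ.wHat_nonneg hs.1.le hs.2) p)) hωs
    _ = wMom (fun s => ω s * wHat μ s ^ p) x :=
        intervalIntegral.integral_congr fun s _ => by simp only [G]; ring

lemma wMom_mul_wMom_rpow_le_wHat_geomRadius {ω μ : ℝ → ℝ} (hω : IsRadialWeight ω)
    (hμ : IsRadialWeight μ) (hωD : Dhat ω) (hμD : Dhat μ) {p q : ℝ} (hp : 0 ≤ p) (hq : 1 < q) :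
    ∃ K > 0, ∀ n : ℕ, 1 ≤ n → wMom ω (q ^ n) * wMom μ (q ^ (n - 1)) ^ p ≤
      K * (wHat ω (geomRadius q n) * wHat μ (geomRadius q (n + 1)) ^ p) := by
  obtain ⟨Aω, hAω, hωA⟩ := hωD.exists_isTailDoubling hω hq.le
  obtain ⟨Aμ, hAμ, hμA⟩ := hμD.exists_isTailDoubling hμ hq.le
  obtain ⟨Bω, hBω, hωB⟩ := hωA.wMom_pow_le hω hq hAω.le
  obtain ⟨Bμ, hBμ, hμB⟩ := hμA.wMom_pow_le hμ hq hAμ.le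
  refine ⟨Bω * (Bμ * Aμ ^ 2) ^ p, by positivity, fun n hn => ?_⟩
  have hr := geomRadius_mem_Ico hq.le
  have hωr : 0 ≤ wHat ω (geomRadius q n) := hω.wHat_nonneg (hr n).1 (hr n).2.le
  have hμr : 0 ≤ wHat μ (geomRadius q (n + 1)) := hμ.wHat_nonneg (hr _).1 (hr _).2.le
  have hμ_mom : wMom μ (q ^ (n - 1)) ≤ Bμ * Aμ ^ 2 * wHat μ (geomRadius q (n + 1)) := by
    have := hμA.wHat_geomRadius_le hq.le hAμ.le (n - 1) 2
    rw [show n - 1 + 2 = n + 1 by omega] at this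
    calc _ ≤ Bμ * wHat μ (geomRadius q (n - 1)) := hμB (n - 1)
      _ ≤ _ := by rw [mul_assoc]; gcongr
  calc wMom ω (q ^ n) * wMom μ (q ^ (n - 1)) ^ p
      ≤ Bω * wHat ω (geomRadius q n) * (Bμ * Aμ ^ 2 * wHat μ (geomRadius q (n + 1))) ^ p :=
        mul_le_mul (hωB n) (rpow_le_rpow (hμ.wMom_nonneg _) hμ_mom hp)
          (rpow_nonneg (hμ.wMom_nonneg _) p) (mul_nonneg hBω.le hωr)
    _ = _ := by rw [mul_rpow (by positivity) hμr]; ring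

lemma wHat_geomRadius_le_wMom_mul_wHat_rpow {ω μ : ℝ → ℝ} (hω : IsRadialWeight ω)
    (hμ : IsRadialWeight μ) {p q c : ℝ} (hp : 0 ≤ p) (hq : 2 ≤ q)
    (hmass : ∀ r ∈ Ico (0:ℝ) 1, c * wHat ω r ≤ ∫ s in r..(1 - (1 - r) / q), ω s)
    {n : ℕ} (hn : 1 ≤ n) :
    c * exp (-2) * (wHat ω (geomRadius q n) * wHat μ (geomRadius q (n + 1)) ^ p) ≤
      wMom (fun s => ω s * wHat μ s ^ p) (q ^ n) := by
  have hq1 : 1 ≤ q := by linarith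
  have hr := geomRadius_mem_Ico hq1
  have hr' : geomRadius q n ≤ geomRadius q (n + 1) := geomRadius_monotone hq1 n.le_succ
  have hμr : 0 ≤ wHat μ (geomRadius q (n + 1)) := hμ.wHat_nonneg (hr _).1 (hr _).2.le
  have hω_mass := hmass _ (hr n)
  rw [one_sub_geomRadius_div] at hω_mass
  have hpow : exp (-2) ≤ geomRadius q n ^ q ^ n :=
    exp_neg_two_le_rpow (hq.trans (le_self_pow₀ hq1 (by omega))) le_rfl
  calc c * exp (-2) * (wHat ω (geomRadius q n) * wHat μ (geomRadius q (n + 1)) ^ p)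
      = exp (-2) * wHat μ (geomRadius q (n + 1)) ^ p * (c * wHat ω (geomRadius q n)) := by ring
    _ ≤ exp (-2) * wHat μ (geomRadius q (n + 1)) ^ p *
          ∫ s in geomRadius q n..geomRadius q (n + 1), ω s := by gcongr
    _ ≤ geomRadius q n ^ q ^ n * wHat μ (geomRadius q (n + 1)) ^ p *
          ∫ s in geomRadius q n..geomRadius q (n + 1), ω s := by
        gcongr
        exact hω.integral_nonneg (hr n).1 hr' (hr _).2.le
    _ ≤ _ := hω.rpow_mul_wHat_rpow_mul_integral_le_wMom hμ hp (by positivity) (hr n).1 hr'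
          (hr _).2.le

/-- **Moment inequality.** Let `0 < p < ∞`, `ω ∈ D`, `μ ∈ D̂`, and let `k > 1` be such
that `∫_r^{1-(1-r)/k} ω ≥ c ω̂(r)` for all `0 ≤ r < 1`.  Then there is
`C = C(ω,μ,p) > 0` with `ω_{kⁿ} μ_{k^{n-1}}^p ≤ C (ω μ̂^p)_{kⁿ}` for all `n ∈ ℕ`. -/
theorem moment_product_estimate (p : ℝ) (hp : 0 < p) (ω μ : ℝ → ℝ)
    (hω : IsRadialWeight ω) (hωD : Dclass ω) (hμ : IsRadialWeight μ) (hμD : Dhat μ)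
    (k : ℕ) (hk : 1 < k) (c : ℝ) (hc : 0 < c)
    (hkc : ∀ r ∈ Set.Ico (0:ℝ) 1, (∫ s in r..(1 - (1 - r) / k), ω s) ≥ c * wHat ω r) :
    ∃ C > (0:ℝ), ∀ n : ℕ, 1 ≤ n →
      wMom ω ((k : ℝ) ^ n) * wMom μ ((k : ℝ) ^ (n - 1)) ^ p ≤
        C * wMom (fun s => ω s * wHat μ s ^ p) ((k : ℝ) ^ n) := by
  have hk2 : (2:ℝ) ≤ k := by exact_mod_cast hk
  obtain ⟨K, hK, hupper⟩ :=
    wMom_mul_wMom_rpow_le_wHat_geomRadius hω hμ hωD.1 hμD hp.le (by linarith : (1:ℝ) < k)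
  refine ⟨K / (c * exp (-2)), by positivity, fun n hn => ?_⟩
  calc wMom ω ((k:ℝ) ^ n) * wMom μ ((k:ℝ) ^ (n - 1)) ^ p
      ≤ K * (wHat ω (geomRadius k n) * wHat μ (geomRadius k (n + 1)) ^ p) := hupper n hn
    _ = K / (c * exp (-2)) *
          (c * exp (-2) * (wHat ω (geomRadius k n) * wHat μ (geomRadius k (n + 1)) ^ p)) := by
        field_simp
    _ ≤ _ := mul_le_mul_of_nonneg_left
          (wHat_geomRadius_le_wMom_mul_wHat_rpow hω hμ hp.le hk2 hkc hn) (by positivity)
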